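/- arXiv:2105.00955 — 2 statements merged into one kernel-verified Lean document; each statement's English description precedes it below -/
import Mathlib

section
/- Let A be a unital alternative *-algebra over ℂ containing a nontrivial symmetric idempotent e satisfying conditions (♠) and (♣), and let Φ : A → A be a map satisfying the *-Jordan n-derivation identity in the last two slots. Then for every a₁₂ ∈ A₁₂ and b₂₁ ∈ A₂₁ one has Φ(a₁₂ + b₂₁) = Φ(a₁₂) + Φ(b₂₁). -/
/-!
With `a₁ = ⋯ = a_{n-2} = 1` the identity reads, for a fixed `u` and `N = 2^{n-2}`,
`Φ (N (x • y)) = (u • x) • y + N (Φ x • y + x • Φ y)`, whose first term is biadditive. So the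
additivity defect `T = Φ (a + b) - Φ a - Φ b` satisfies
`N (T • y) = Φ (N ((a + b) • y)) - Φ (N (a • y)) - Φ (N (b • y))`, and likewise in the other
slot. Since `a e = 0` and `b (1 - e) = 0`, this gives `T • e = T • (1 - e) = 0`, i.e. `T* = -T`
and `eT = Te`; since `e` and `1 - e` both fix `a` and `b` in the left slot, it gives
`e • T = (1 - e) • T`, hence `e • T = T`, i.e. `2 eT = T`. Multiplying by `e` and using
`e (e T) = (e e) T` (alternativity) yields `eT = T`, so `T = 2T` and `T = 0`.
-/

/-- The Jordan `•`-product `a • b = ab + b a*`. -/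
def starJordan {A : Type*} [NonAssocRing A] [StarRing A] (a b : A) : A :=
  a * b + b * star a

/-- Left-normed iterated Jordan `•`-product of a list (empty list ↦ 0, junk value). -/
def leftStarJordan {A : Type*} [NonAssocRing A] [StarRing A] : List A → A
  | [] => 0
  | x :: xs => xs.foldl starJordan x

/-- The family `a₁ = ⋯ = a_{n-2} = 1`, `a_{n-1} = x`, `a_n = y`. -/
def lastTwoFamily {A : Type*} [One A] (n : ℕ) (x y : A) : Fin n → A :=
  fun i => if (i : ℕ) = n - 2 then x else if (i : ℕ) = n - 1 then y else 1

/-- `e₁ = e`, `e₂ = 1 - e`. -/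
def peirceIdem {A : Type*} [NonAssocRing A] (e : A) : Fin 2 → A :=
  fun i => if i = 0 then e else 1 - e

/-- Membership in the Peirce component `A_{ij}`: `eᵢ x = x` and `x eⱼ = x`. -/
def inPeirce {A : Type*} [NonAssocRing A] (e : A) (i j : Fin 2) (x : A) : Prop :=
  peirceIdem e i * x = x ∧ x * peirceIdem e j = x

/-- The inner derivation `Ξ_{y,z}(a) = y(za) − z(ya) + y(az) − (ya)z + (az)y − (ay)z`. -/
def innerDer {A : Type*} [NonAssocRing A] (y z a : A) : A :=
  y * (z * a) - z * (y * a) + y * (a * z) - (y * a) * z + (a * z) * y - (a * y) * z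

section StarJordan

variable {A : Type*} [NonAssocRing A] [StarRing A]

lemma starJordan_add_left (x x' y : A) :
    starJordan (x + x') y = starJordan x y + starJordan x' y := by
  simp only [starJordan, add_mul, mul_add, star_add]; abel

lemma starJordan_add_right (x y y' : A) :
    starJordan x (y + y') = starJordan x y + starJordan x y' := by
  simp only [starJordan, add_mul, mul_add]; abel

lemma starJordan_sum_left {ι : Type*} (s : Finset ι) (f : ι → A) (y : A) :
    starJordan (∑ i ∈ s, f i) y = ∑ i ∈ s, starJordan (f i) y :=
  map_sum (AddMonoidHom.mk' (starJordan · y) (starJordan_add_left · · y)) f s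

lemma starJordan_nsmul_left (k : ℕ) (x y : A) :
    starJordan (k • x) y = k • starJordan x y := by
  simp only [starJordan, smul_mul_assoc, star_nsmul, mul_smul_comm, smul_add]

lemma starJordan_one_left (x : A) : starJordan 1 x = 2 • x := by
  simp [starJordan, two_smul]

lemma starJordan_one_right (x : A) : starJordan x 1 = x + star x := by
  simp [starJordan]

lemma leftStarJordan_append_pair {l : List A} (hl : l ≠ []) (x y : A) :
    leftStarJordan (l ++ [x, y]) = starJordan (starJordan (leftStarJordan l) x) y := by
  obtain ⟨h, t, rfl⟩ := List.exists_cons_of_ne_nil hl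
  simp [leftStarJordan, List.foldl_append]

lemma leftStarJordan_replicate_one (k : ℕ) :
    leftStarJordan (List.replicate (k + 1) (1 : A)) = 2 ^ k • 1 := by
  induction k with
  | zero => simp [leftStarJordan]
  | succ k ih =>
    rw [List.replicate_succ', List.replicate_succ, List.cons_append, leftStarJordan,
      List.foldl_concat, ← leftStarJordan, ← List.replicate_succ, ih,
      starJordan_nsmul_left, starJordan_one_left, smul_smul, pow_succ]

lemma leftStarJordan_replicate_one_append_pair (m : ℕ) (x y : A) :
    leftStarJordan (List.replicate m (1 : A) ++ [x, y]) = 2 ^ m • starJordan x y := by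
  cases m with
  | zero => simp [leftStarJordan]
  | succ k =>
    rw [leftStarJordan_append_pair (by simp), leftStarJordan_replicate_one]
    simp only [starJordan_nsmul_left, starJordan_one_left, smul_smul, ← pow_succ]

end StarJordan

lemma Fin.update_append_castAdd {α : Type*} {m n : ℕ} (g : Fin m → α) (h : Fin n → α)
    (j : Fin m) (v : α) :
    Function.update (Fin.append g h) (Fin.castAdd n j) v =
      Fin.append (Function.update g j v) h := by
  ext i
  refine Fin.addCases (fun i => ?_) (fun i => ?_) i <;> simp [Function.update_apply, Fin.ext_iff]
  all_goals exact fun h => absurd h (by omega)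

lemma Fin.update_append_natAdd {α : Type*} {m n : ℕ} (g : Fin m → α) (h : Fin n → α)
    (j : Fin n) (v : α) :
    Function.update (Fin.append g h) (Fin.natAdd m j) v = Fin.append g (Function.update h j v) := by
  ext i
  refine Fin.addCases (fun i => ?_) (fun i => ?_) i <;> simp [Function.update_apply, Fin.ext_iff]
  all_goals exact fun h => absurd h (by omega)

lemma lastTwoFamily_eq_append {A : Type*} [One A] (m : ℕ) (x y : A) :
    lastTwoFamily (m + 2) x y = Fin.append (fun _ : Fin m => 1) ![x, y] := by
  ext i
  refine Fin.addCases (fun i => ?_) (fun i => ?_) i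
  · rw [Fin.append_left, lastTwoFamily, Fin.val_castAdd, if_neg (by omega), if_neg (by omega)]
  · fin_cases i <;> simp [lastTwoFamily]

section LastTwoFamily

variable {A : Type*} [NonAssocRing A] [StarRing A]

lemma leftStarJordan_ofFn_lastTwoFamily (m : ℕ) (x y : A) :
    leftStarJordan (List.ofFn (lastTwoFamily (m + 2) x y)) = 2 ^ m • starJordan x y := by
  rw [lastTwoFamily_eq_append, List.ofFn_fin_append, List.ofFn_const]
  exact leftStarJordan_replicate_one_append_pair m x y

lemma leftStarJordan_ofFn_append_pair {m : ℕ} (hm : m ≠ 0) (g : Fin m → A) (x y : A) :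
    leftStarJordan (List.ofFn (Fin.append g ![x, y])) =
      starJordan (starJordan (leftStarJordan (List.ofFn g)) x) y := by
  rw [List.ofFn_fin_append]
  exact leftStarJordan_append_pair (by simpa using hm) x y

lemma sum_leftStarJordan_update_lastTwoFamily (Φ : A → A) (m : ℕ) (x y : A) :
    ∑ k : Fin (m + 2), leftStarJordan (List.ofFn
        (Function.update (lastTwoFamily (m + 2) x y) k (Φ (lastTwoFamily (m + 2) x y k)))) =
      starJordan (starJordan (∑ j : Fin m,
          leftStarJordan (List.ofFn (Function.update (fun _ ↦ (1 : A)) j (Φ 1)))) x) y +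
        2 ^ m • (starJordan (Φ x) y + starJordan x (Φ y)) := by
  rw [lastTwoFamily_eq_append, Fin.sum_univ_add, Fin.sum_univ_two, starJordan_sum_left,
    starJordan_sum_left, smul_add]
  congr 1
  · refine Finset.sum_congr rfl fun j _ ↦ ?_
    rw [Fin.append_left, Fin.update_append_castAdd,
      leftStarJordan_ofFn_append_pair (Fin.pos j).ne']
  congr 1
  · rw [Fin.append_right, Fin.update_append_natAdd, Matrix.cons_val_zero,
      show Function.update ![x, y] 0 (Φ x) = ![Φ x, y] by ext i; fin_cases i <;> rfl,
      ← lastTwoFamily_eq_append, leftStarJordan_ofFn_lastTwoFamily]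
  · rw [Fin.append_right, Fin.update_append_natAdd, Matrix.cons_val_one, Matrix.cons_val_zero,
      show Function.update ![x, y] 1 (Φ y) = ![x, Φ y] by ext i; fin_cases i <;> rfl,
      ← lastTwoFamily_eq_append, leftStarJordan_ofFn_lastTwoFamily]

end LastTwoFamily

def ScaledStarJordanRule {A : Type*} [NonAssocRing A] [StarRing A]
    (Φ : A → A) (N : ℕ) (u : A) : Prop :=
  ∀ x y : A, Φ (N • starJordan x y) =
    starJordan (starJordan u x) y + N • (starJordan (Φ x) y + starJordan x (Φ y))

theorem exists_scaledStarJordanRule_of_lastTwoFamily {A : Type*} [NonAssocRing A] [StarRing A]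
    {Φ : A → A} {m : ℕ}
    (hΦ : ∀ x y : A,
      Φ (leftStarJordan (List.ofFn (lastTwoFamily (m + 2) x y))) =
        ∑ k : Fin (m + 2), leftStarJordan (List.ofFn
          (Function.update (lastTwoFamily (m + 2) x y) k (Φ (lastTwoFamily (m + 2) x y k))))) :
    ∃ u : A, ScaledStarJordanRule Φ (2 ^ m) u :=
  ⟨_, fun x y ↦ by
    rw [← leftStarJordan_ofFn_lastTwoFamily, hΦ, sum_leftStarJordan_update_lastTwoFamily]⟩

def addDefect {A B : Type*} [Add A] [AddCommGroup B] (Φ : A → B) (x y : A) : B :=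
  Φ (x + y) - Φ x - Φ y

lemma addDefect_eq_zero_iff {A B : Type*} [Add A] [AddCommGroup B] {Φ : A → B} {x y : A} :
    addDefect Φ x y = 0 ↔ Φ (x + y) = Φ x + Φ y := by
  rw [addDefect, sub_sub, sub_eq_zero]

section ScaledStarJordanRule

variable {A : Type*} [NonAssocRing A] [StarRing A] {Φ : A → A} {N : ℕ} {u : A}

lemma ScaledStarJordanRule.map_zero
    (hΦ : ScaledStarJordanRule Φ N u) : Φ 0 = 0 := by
  simpa [starJordan] using hΦ 0 0

lemma ScaledStarJordanRule.addDefect_nsmul_starJordan_left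
    (hΦ : ScaledStarJordanRule Φ N u) (x x' y : A) :
    addDefect Φ (N • starJordan x y) (N • starJordan x' y) =
      N • starJordan (addDefect Φ x x') y := by
  rw [addDefect, ← smul_add, ← starJordan_add_left, hΦ, hΦ, hΦ, addDefect]
  simp only [starJordan, add_mul, mul_add, sub_mul, mul_sub, star_add, star_sub, smul_add,
    smul_sub]
  abel

lemma ScaledStarJordanRule.addDefect_nsmul_starJordan_right
    (hΦ : ScaledStarJordanRule Φ N u) (x y y' : A) :
    addDefect Φ (N • starJordan x y) (N • starJordan x y') =
      N • starJordan x (addDefect Φ y y') := by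
  rw [addDefect, ← smul_add, ← starJordan_add_right, hΦ, hΦ, hΦ, addDefect]
  simp only [starJordan, add_mul, mul_add, sub_mul, mul_sub, star_add, smul_add, smul_sub]
  abel

variable [IsAddTorsionFree A]

lemma ScaledStarJordanRule.starJordan_addDefect_left_eq_zero
    (hΦ : ScaledStarJordanRule Φ N u) (hN : N ≠ 0) {x x' y : A}
    (h : starJordan x y = 0 ∨ starJordan x' y = 0) :
    starJordan (addDefect Φ x x') y = 0 := by
  refine (nsmul_right_inj hN).mp ?_
  rw [smul_zero, ← hΦ.addDefect_nsmul_starJordan_left]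
  rcases h with h | h <;> simp [h, addDefect, hΦ.map_zero]

lemma ScaledStarJordanRule.starJordan_addDefect_right_congr
    (hΦ : ScaledStarJordanRule Φ N u) (hN : N ≠ 0) {x z y y' : A}
    (hy : starJordan x y = starJordan z y)
    (hy' : starJordan x y' = starJordan z y') :
    starJordan x (addDefect Φ y y') = starJordan z (addDefect Φ y y') := by
  refine (nsmul_right_inj hN).mp ?_
  rw [← hΦ.addDefect_nsmul_starJordan_right, ← hΦ.addDefect_nsmul_starJordan_right, hy, hy']

end ScaledStarJordanRule

section Peirce

variable {A : Type*} [NonAssocRing A]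

lemma inPeirce_zero_one_iff {e x : A} : inPeirce e 0 1 x ↔ e * x = x ∧ x * e = 0 := by
  simp [inPeirce, peirceIdem, mul_sub]

lemma inPeirce_one_zero_iff {e x : A} :
    inPeirce e 1 0 x ↔ (1 - e) * x = x ∧ x * (1 - e) = 0 := by
  simp [inPeirce, peirceIdem, mul_sub, sub_eq_zero, eq_comm]

variable [StarRing A] {p x : A}

lemma starJordan_eq_zero_of_mul_eq_zero (hp : star p = p) (hxp : x * p = 0) :
    starJordan x p = 0 := by
  rw [starJordan, ← hp, ← star_mul, hp, hxp, star_zero, add_zero]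

lemma starJordan_left_eq_of_mul_eq (hp : star p = p) (hpx : p * x = x) (hxp : x * p = 0) :
    starJordan p x = x := by
  rw [starJordan, hp, hpx, hxp, add_zero]

lemma starJordan_one_sub_left_eq_of_mul_eq (hp : star p = p) (hpx : p * x = x)
    (hxp : x * p = 0) : starJordan (1 - p) x = x := by
  rw [starJordan, star_sub, star_one, hp, sub_mul, mul_sub, hpx, hxp]
  simp

lemma eq_zero_of_starJordan_eq_zero [IsAddTorsionFree A] {e T : A} (he : star e = e)
    (heeT : e * (e * T) = e * T) (h₁ : starJordan T e = 0) (h₂ : starJordan T (1 - e) = 0)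
    (h₃ : starJordan e T = starJordan (1 - e) T) : T = 0 := by
  have hstar : star T = -T := by
    have h := starJordan_add_right T e (1 - e)
    rw [add_sub_cancel, starJordan_one_right, h₁, h₂, add_zero] at h
    exact eq_neg_of_add_eq_zero_right h
  have hcomm : e * T = T * e := by
    rw [starJordan, hstar, mul_neg, ← sub_eq_add_neg, sub_eq_zero] at h₁
    exact h₁.symm
  have hJ : starJordan e T = T := by
    refine nsmul_right_injective two_ne_zero ?_
    calc 2 • starJordan e T = starJordan e T + starJordan (1 - e) T := by rw [two_smul, ← h₃]
      _ = 2 • T := by rw [← starJordan_add_left, add_sub_cancel, starJordan_one_left]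
  have h2eT : e * T + e * T = T := by rwa [starJordan, he, ← hcomm] at hJ
  have heT : e * T = T :=
    calc e * T = e * (e * T + e * T) := by rw [h2eT]
      _ = T := by rw [mul_add, heeT, h2eT]
  rw [heT] at h2eT
  exact add_eq_left.mp h2eT

end Peirce

theorem stmt_3_general {A : Type*} [NonAssocRing A] [Module ℂ A]
    [StarRing A]
    (halt₁ : ∀ a b : A, a * a * b = a * (a * b))
    (e : A) (heStar : star e = e) (heIdem : e * e = e)
    (n : ℕ) (hn : 2 ≤ n) (Φ : A → A)
    (hΦ : ∀ x y : A,
      Φ (leftStarJordan (List.ofFn (lastTwoFamily n x y))) =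
        ∑ k : Fin n, leftStarJordan (List.ofFn
          (Function.update (lastTwoFamily n x y) k (Φ (lastTwoFamily n x y k))))) :
    ∀ a b : A, inPeirce e 0 1 a → inPeirce e 1 0 b →
      Φ (a + b) = Φ a + Φ b := by
  obtain ⟨m, rfl⟩ : ∃ m, n = m + 2 := ⟨n - 2, by omega⟩
  obtain ⟨u, hu⟩ := exists_scaledStarJordanRule_of_lastTwoFamily hΦ
  have := IsAddTorsionFree.of_isTorsionFree ℂ A
  have hN : 2 ^ m ≠ 0 := pow_ne_zero m two_ne_zero
  intro a b ha hb
  rw [inPeirce_zero_one_iff] at ha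
  rw [inPeirce_one_zero_iff] at hb
  have hf : star (1 - e) = 1 - e := by rw [star_sub, star_one, heStar]
  have hea := starJordan_left_eq_of_mul_eq heStar ha.1 ha.2
  have hfa := starJordan_one_sub_left_eq_of_mul_eq heStar ha.1 ha.2
  have hfb := starJordan_left_eq_of_mul_eq hf hb.1 hb.2
  have heb := starJordan_one_sub_left_eq_of_mul_eq hf hb.1 hb.2
  rw [sub_sub_cancel] at heb
  rw [← addDefect_eq_zero_iff]
  exact eq_zero_of_starJordan_eq_zero heStar (by rw [← halt₁, heIdem])
    (hu.starJordan_addDefect_left_eq_zero hN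
      (.inl (starJordan_eq_zero_of_mul_eq_zero heStar ha.2)))
    (hu.starJordan_addDefect_left_eq_zero hN
      (.inr (starJordan_eq_zero_of_mul_eq_zero hf hb.2)))
    (hu.starJordan_addDefect_right_congr hN (hea.trans hfa.symm) (heb.trans hfb.symm))

theorem stmt_3 {A : Type*} [NonAssocRing A] [Module ℂ A]
    [SMulCommClass ℂ A A] [IsScalarTower ℂ A A] [StarRing A]
    (halt₁ : ∀ a b : A, a * a * b = a * (a * b))
    (halt₂ : ∀ a b : A, b * a * a = b * (a * a))
    (e : A) (heStar : star e = e) (heIdem : e * e = e) (he0 : e ≠ 0) (he1 : e ≠ 1)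
    (hsp : ∀ x : A, (∀ r : A, x * r * e = 0) → x = 0)
    (hcl : ∀ x : A, (∀ r : A, x * r * (1 - e) = 0) → x = 0)
    (n : ℕ) (hn : 2 ≤ n) (Φ : A → A)
    (hΦ : ∀ x y : A,
      Φ (leftStarJordan (List.ofFn (lastTwoFamily n x y))) =
        ∑ k : Fin n, leftStarJordan (List.ofFn
          (Function.update (lastTwoFamily n x y) k (Φ (lastTwoFamily n x y k))))) :
    ∀ a b : A, inPeirce e 0 1 a → inPeirce e 1 0 b →
      Φ (a + b) = Φ a + Φ b :=
  stmt_3_general halt₁ e heStar heIdem n hn Φ hΦ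
end

section
/- Let A be a unital alternative *-algebra over ℂ containing a nontrivial symmetric idempotent e satisfying conditions (♠) and (♣), and let Φ : A → A be a map satisfying the *-Jordan n-derivation identity in the last two slots. Then for every a₁₁ ∈ A₁₁, b₁₂ ∈ A₁₂, c₂₁ ∈ A₂₁, d₂₂ ∈ A₂₂ one has Φ(a₁₁ + b₁₂ + c₂₁ + d₂₂) = Φ(a₁₁) + Φ(b₁₂) + Φ(c₂₁) + Φ(d₂₂). -/
set_option linter.unusedSectionVars false

section Basic
variable {A : Type*} [NonAssocRing A] [StarRing A]

lemma st5_nsmul_mul (c : ℕ) (p q : A) : (c • p) * q = c • (p * q) := by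
  induction c with
  | zero => rw [zero_nsmul, zero_nsmul, zero_mul]
  | succ c ih => rw [succ_nsmul, succ_nsmul, add_mul, ih]

lemma st5_mul_nsmul (c : ℕ) (p q : A) : p * (c • q) = c • (p * q) := by
  induction c with
  | zero => rw [zero_nsmul, zero_nsmul, mul_zero]
  | succ c ih => rw [succ_nsmul, succ_nsmul, mul_add, ih]

lemma st5_star_nsmul (c : ℕ) (p : A) : star (c • p) = c • star p := by
  induction c with
  | zero => rw [zero_nsmul, zero_nsmul, star_zero]
  | succ c ih => rw [succ_nsmul, succ_nsmul, star_add, ih]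

lemma sj_add_left (p q r : A) : starJordan (p + q) r = starJordan p r + starJordan q r := by
  simp only [starJordan, add_mul, mul_add, star_add]; abel

lemma sj_add_right (p q r : A) : starJordan p (q + r) = starJordan p q + starJordan p r := by
  simp only [starJordan, add_mul, mul_add]; abel

lemma sj_sub_left (p q r : A) : starJordan (p - q) r = starJordan p r - starJordan q r := by
  simp only [starJordan, sub_mul, mul_sub, star_sub]; abel

lemma sj_sub_right (p q r : A) : starJordan p (q - r) = starJordan p q - starJordan p r := by
  simp only [starJordan, sub_mul, mul_sub]; abel

lemma sj_zero_left (p : A) : starJordan 0 p = 0 := by simp [starJordan]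

lemma sj_zero_right (p : A) : starJordan p 0 = 0 := by simp [starJordan]

lemma st5_foldl_ones (m : ℕ) : ∀ c : ℕ,
    List.foldl starJordan (c • (1:A)) (List.replicate m (1:A)) = (2^m * c) • (1:A) := by
  induction m with
  | zero => intro c; simp
  | succ m ih =>
      intro c
      rw [List.replicate_succ, List.foldl_cons]
      have h1 : starJordan (c • (1:A)) 1 = (2 * c) • (1:A) := by
        rw [starJordan, st5_star_nsmul, star_one, mul_one, one_mul, ← add_nsmul, two_mul]
      rw [h1, ih (2*c)]
      ring_nf

lemma st5_lsj_replicate (m : ℕ) (x y : A) :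
    leftStarJordan (List.replicate m (1:A) ++ [x, y]) = 2^m • starJordan x y := by
  cases m with
  | zero => simp [leftStarJordan, starJordan]
  | succ m =>
      rw [List.replicate_succ, List.cons_append]
      show List.foldl starJordan 1 (List.replicate m (1:A) ++ [x,y]) = _
      rw [List.foldl_append]
      have h0 : List.foldl starJordan (1:A) (List.replicate m (1:A)) = (2^m) • (1:A) := by
        have := st5_foldl_ones (A := A) m 1
        simpa using this
      rw [h0]
      have h1 : starJordan ((2^m) • (1:A)) x = (2^(m+1)) • x := by
        rw [starJordan, st5_star_nsmul, star_one, st5_nsmul_mul, st5_mul_nsmul, one_mul,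
          mul_one, ← add_nsmul, pow_succ]
        congr 1
        ring
      have h2 : starJordan ((2^(m+1)) • x) y = (2^(m+1)) • starJordan x y := by
        rw [starJordan, st5_star_nsmul, st5_nsmul_mul, st5_mul_nsmul, starJordan, smul_add]
      simp only [List.foldl_cons, List.foldl_nil, h1, h2]

lemma st5_lsj_append (L : List A) (hL : L ≠ []) (x y : A) :
    leftStarJordan (L ++ [x, y]) = starJordan (starJordan (leftStarJordan L) x) y := by
  cases L with
  | nil => exact absurd rfl hL
  | cons h t =>
      show List.foldl starJordan h (t ++ [x,y]) = _
      rw [List.foldl_append]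
      rfl

lemma st5_ofFn_split {n : ℕ} (hn : 2 ≤ n) (h : Fin n → A) :
    List.ofFn h = List.ofFn (fun i : Fin (n-2) => h ⟨i.1, by omega⟩)
      ++ [h ⟨n-2, by omega⟩, h ⟨n-1, by omega⟩] := by
  apply List.ext_getElem
  · simp; omega
  · intro i h1 h2
    simp only [List.length_ofFn] at h1
    rw [List.getElem_ofFn]
    by_cases hi : i < n - 2
    · rw [List.getElem_append_left (by simpa using hi)]
      simp
    · rw [List.getElem_append_right (by simpa using hi)]
      have : i = n - 2 ∨ i = n - 1 := by omega
      rcases this with h' | h'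
      · subst h'
        have : n - 2 - (List.ofFn (fun i : Fin (n-2) => h ⟨i.1, by omega⟩)).length = 0 := by
          simp
        simp only [this, List.getElem_cons_zero]
      · subst h'
        have : n - 1 - (List.ofFn (fun i : Fin (n-2) => h ⟨i.1, by omega⟩)).length = 1 := by
          simp; omega
        simp only [this, List.getElem_cons_succ, List.getElem_cons_zero]

end Basic

section Key
variable {A : Type*} [NonAssocRing A] [StarRing A]

lemma st5_key (n : ℕ) (hn : 2 ≤ n) (Φ : A → A)
    (hΦ : ∀ x y : A,
      Φ (leftStarJordan (List.ofFn (lastTwoFamily n x y))) =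
        ∑ k : Fin n, leftStarJordan (List.ofFn
          (Function.update (lastTwoFamily n x y) k (Φ (lastTwoFamily n x y k))))) :
    ∃ (K : Finset (Fin n)) (W : Fin n → A), ∀ x y : A,
      Φ ((2^(n-2)) • starJordan x y) =
        (2^(n-2)) • starJordan (Φ x) y + (2^(n-2)) • starJordan x (Φ y) +
        ∑ k ∈ K, starJordan (starJordan (W k) x) y := by
  have h21 : n - 2 < n := by omega
  have h11 : n - 1 < n := by omega
  set k2 : Fin n := ⟨n-2, h21⟩ with hk2
  set k1 : Fin n := ⟨n-1, h11⟩ with hk1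
  have hk12 : k1 ≠ k2 := by
    simp only [hk1, hk2, Ne, Fin.mk.injEq]; omega
  refine ⟨(Finset.univ.erase k2).erase k1,
    fun k => leftStarJordan (List.ofFn (fun i : Fin (n-2) =>
      if (i:ℕ) = (k:ℕ) then Φ 1 else 1)), ?_⟩
  intro x y
  have main := hΦ x y
  -- LHS
  have hF2 : lastTwoFamily n x y k2 = x := by
    simp [lastTwoFamily, hk2]
  have hF1 : lastTwoFamily n x y k1 = y := by
    have : n - 1 ≠ n - 2 := by omega
    simp [lastTwoFamily, hk1, this]
  have hFlt : ∀ i : ℕ, i < n - 2 → ∀ (hi : i < n), lastTwoFamily n x y ⟨i, hi⟩ = 1 := by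
    intro i hi hi'
    have h1 : i ≠ n - 2 := by omega
    have h2 : i ≠ n - 1 := by omega
    simp [lastTwoFamily, h1, h2]
  have hlist : List.ofFn (lastTwoFamily n x y) = List.replicate (n-2) (1:A) ++ [x, y] := by
    rw [st5_ofFn_split hn (lastTwoFamily n x y)]
    congr 1
    · rw [← List.ofFn_const (n-2) (1:A)]
      congr 1
      funext i
      exact hFlt i.1 i.2 _
    · rw [hF2, hF1]
  have hLHS : leftStarJordan (List.ofFn (lastTwoFamily n x y)) = (2^(n-2)) • starJordan x y := by
    rw [hlist, st5_lsj_replicate]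
  -- sum splitting
  rw [hLHS] at main
  rw [main]
  rw [← Finset.add_sum_erase _ _ (Finset.mem_univ k2)]
  rw [← Finset.add_sum_erase _ _ (Finset.mem_erase.mpr ⟨hk12, Finset.mem_univ k1⟩)]
  -- term k2
  have hterm2 : leftStarJordan (List.ofFn
      (Function.update (lastTwoFamily n x y) k2 (Φ (lastTwoFamily n x y k2)))) =
      (2^(n-2)) • starJordan (Φ x) y := by
    have : List.ofFn (Function.update (lastTwoFamily n x y) k2 (Φ (lastTwoFamily n x y k2)))
        = List.replicate (n-2) (1:A) ++ [Φ x, y] := by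
      rw [st5_ofFn_split hn]
      congr 1
      · rw [← List.ofFn_const (n-2) (1:A)]
        congr 1
        funext i
        rw [Function.update_apply]
        have hne : (⟨i.1, by omega⟩ : Fin n) ≠ k2 := by
          simp only [hk2, Ne, Fin.mk.injEq]; omega
        rw [if_neg hne]
        exact hFlt i.1 i.2 _
      · have e2 : (⟨n-2, by omega⟩ : Fin n) = k2 := rfl
        have e1 : (⟨n-1, by omega⟩ : Fin n) = k1 := rfl
        rw [e2, e1, Function.update_self, Function.update_of_ne hk12, hF2, hF1]
    rw [this, st5_lsj_replicate]
  -- term k1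
  have hterm1 : leftStarJordan (List.ofFn
      (Function.update (lastTwoFamily n x y) k1 (Φ (lastTwoFamily n x y k1)))) =
      (2^(n-2)) • starJordan x (Φ y) := by
    have : List.ofFn (Function.update (lastTwoFamily n x y) k1 (Φ (lastTwoFamily n x y k1)))
        = List.replicate (n-2) (1:A) ++ [x, Φ y] := by
      rw [st5_ofFn_split hn]
      congr 1
      · rw [← List.ofFn_const (n-2) (1:A)]
        congr 1
        funext i
        rw [Function.update_apply]
        have hne : (⟨i.1, by omega⟩ : Fin n) ≠ k1 := by
          simp only [hk1, Ne, Fin.mk.injEq]; omega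
        rw [if_neg hne]
        exact hFlt i.1 i.2 _
      · have e2 : (⟨n-2, by omega⟩ : Fin n) = k2 := rfl
        have e1 : (⟨n-1, by omega⟩ : Fin n) = k1 := rfl
        rw [e2, e1, Function.update_of_ne (Ne.symm hk12), Function.update_self, hF2, hF1]
    rw [this, st5_lsj_replicate]
  rw [hterm2, hterm1]
  rw [add_assoc]
  congr 1
  congr 1
  · -- remaining sum
    apply Finset.sum_congr rfl
    intro k hk
    have hkmem := hk
    rw [Finset.mem_erase] at hkmem
    obtain ⟨hkk1, hkmem⟩ := hkmem
    rw [Finset.mem_erase] at hkmem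
    obtain ⟨hkk2, -⟩ := hkmem
    have hklt : (k:ℕ) < n - 2 := by
      have h1 : (k:ℕ) ≠ n - 2 := fun h => hkk2 (Fin.ext h)
      have h2 : (k:ℕ) ≠ n - 1 := fun h => hkk1 (Fin.ext h)
      have := k.2
      omega
    have hFk : lastTwoFamily n x y k = 1 := by
      have h1 : (k:ℕ) ≠ n - 2 := by omega
      have h2 : (k:ℕ) ≠ n - 1 := by omega
      simp [lastTwoFamily, h1, h2]
    have hlist' : List.ofFn (Function.update (lastTwoFamily n x y) k (Φ (lastTwoFamily n x y k)))
        = (List.ofFn (fun i : Fin (n-2) => if (i:ℕ) = (k:ℕ) then Φ 1 else (1:A))) ++ [x, y] := by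
      rw [st5_ofFn_split hn]
      congr 1
      · congr 1
        funext i
        rw [Function.update_apply, hFk]
        by_cases hik : (i:ℕ) = (k:ℕ)
        · have h' : (⟨i.1, by omega⟩ : Fin n) = k := Fin.ext hik
          simp only [h', if_pos hik]
          simp
        · have h' : ¬ ((⟨i.1, by omega⟩ : Fin n) = k) := fun h => hik (congrArg Fin.val h)
          simp only [if_neg h', if_neg hik]
          exact hFlt i.1 i.2 _
      · have e2 : (⟨n-2, by omega⟩ : Fin n) = k2 := rfl
        have e1 : (⟨n-1, by omega⟩ : Fin n) = k1 := rfl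
        rw [e2, e1, Function.update_of_ne (Ne.symm hkk2), Function.update_of_ne (Ne.symm hkk1),
          hF2, hF1]
    rw [hlist', st5_lsj_append]
    intro hnil
    have := congrArg List.length hnil
    simp only [List.length_ofFn, List.length_nil] at this
    omega
end Key

theorem stmt_5 {A : Type*} [NonAssocRing A] [Module ℂ A]
    [SMulCommClass ℂ A A] [IsScalarTower ℂ A A] [StarRing A]
    (halt₁ : ∀ a b : A, a * a * b = a * (a * b))
    (halt₂ : ∀ a b : A, b * a * a = b * (a * a))
    (e : A) (heStar : star e = e) (heIdem : e * e = e) (he0 : e ≠ 0) (he1 : e ≠ 1)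
    (hsp : ∀ x : A, (∀ r : A, x * r * e = 0) → x = 0)
    (hcl : ∀ x : A, (∀ r : A, x * r * (1 - e) = 0) → x = 0)
    (n : ℕ) (hn : 2 ≤ n) (Φ : A → A)
    (hΦ : ∀ x y : A,
      Φ (leftStarJordan (List.ofFn (lastTwoFamily n x y))) =
        ∑ k : Fin n, leftStarJordan (List.ofFn
          (Function.update (lastTwoFamily n x y) k (Φ (lastTwoFamily n x y k))))) :
    ∀ a b c d : A, inPeirce e 0 0 a → inPeirce e 0 1 b →
      inPeirce e 1 0 c → inPeirce e 1 1 d →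
      Φ (a + b + c + d) = Φ a + Φ b + Φ c + Φ d := by
  intro a b c d ha hb hc hd
  -- ## memberships
  have ha1 : e * a = a := by have := ha.1; simpa [peirceIdem] using this
  have ha2 : a * e = a := by have := ha.2; simpa [peirceIdem] using this
  have hb1 : e * b = b := by have := hb.1; simpa [peirceIdem] using this
  have hb2 : b * e = 0 := by
    have h := hb.2
    simp only [peirceIdem, inPeirce] at h
    norm_num at h
    have : b * 1 - b * e = b := by rw [← mul_sub]; exact h
    rw [mul_one] at this
    calc b * e = b - (b - b * e) := by abel
    _ = 0 := by rw [this]; abel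
  have hc1 : e * c = 0 := by
    have h := hc.1
    simp only [peirceIdem, inPeirce] at h
    norm_num at h
    have : 1 * c - e * c = c := by rw [← sub_mul]; exact h
    rw [one_mul] at this
    calc e * c = c - (c - e * c) := by abel
    _ = 0 := by rw [this]; abel
  have hc2 : c * e = c := by have := hc.2; simpa [peirceIdem] using this
  have hd1 : e * d = 0 := by
    have h := hd.1
    simp only [peirceIdem, inPeirce] at h
    norm_num at h
    have : 1 * d - e * d = d := by rw [← sub_mul]; exact h
    rw [one_mul] at this
    calc e * d = d - (d - e * d) := by abel
    _ = 0 := by rw [this]; abel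
  have hd2 : d * e = 0 := by
    have h := hd.2
    simp only [peirceIdem, inPeirce] at h
    norm_num at h
    have : d * 1 - d * e = d := by rw [← mul_sub]; exact h
    rw [mul_one] at this
    calc d * e = d - (d - d * e) := by abel
    _ = 0 := by rw [this]; abel
  -- ## star memberships
  have hsa1 : e * star a = star a := by
    have := congrArg star ha2; rwa [star_mul, heStar] at this
  have hsa2 : star a * e = star a := by
    have := congrArg star ha1; rwa [star_mul, heStar] at this
  have hsb1 : e * star b = 0 := by
    have := congrArg star hb2; rwa [star_mul, heStar, star_zero] at this
  have hsb2 : star b * e = star b := by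
    have := congrArg star hb1; rwa [star_mul, heStar] at this
  have hsc1 : e * star c = star c := by
    have := congrArg star hc2; rwa [star_mul, heStar] at this
  have hsc2 : star c * e = 0 := by
    have := congrArg star hc1; rwa [star_mul, heStar, star_zero] at this
  have hsd1 : e * star d = 0 := by
    have := congrArg star hd2; rwa [star_mul, heStar, star_zero] at this
  have hsd2 : star d * e = 0 := by
    have := congrArg star hd1; rwa [star_mul, heStar, star_zero] at this
  -- ## scalar helpers
  obtain ⟨K, W, key⟩ := st5_key n hn Φ hΦ
  have hc0' : (2^(n-2) : ℕ) ≠ 0 := pow_ne_zero _ two_ne_zero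
  have hc0 : ((2^(n-2) : ℕ) : ℂ) ≠ 0 := Nat.cast_ne_zero.mpr hc0'
  have cancel : ∀ {p q : A}, (2^(n-2) : ℕ) • p = (2^(n-2) : ℕ) • q → p = q := by
    intro p q h
    have h' : ((2^(n-2) : ℕ) : ℂ) • p = ((2^(n-2) : ℕ) : ℂ) • q := by
      rw [Nat.cast_smul_eq_nsmul, Nat.cast_smul_eq_nsmul]; exact h
    calc p = (((2^(n-2) : ℕ) : ℂ))⁻¹ • (((2^(n-2) : ℕ) : ℂ) • p) := (inv_smul_smul₀ hc0 p).symm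
    _ = (((2^(n-2) : ℕ) : ℂ))⁻¹ • (((2^(n-2) : ℕ) : ℂ) • q) := by rw [h']
    _ = q := inv_smul_smul₀ hc0 q
  have cancel0 : ∀ {p : A}, (2^(n-2) : ℕ) • p = 0 → p = 0 := by
    intro p h
    exact cancel (by rw [h, smul_zero])
  have two_cancel : ∀ {p q : A}, p + p = q + q → p = q := by
    intro p q h
    have h' : (2:ℂ) • p = (2:ℂ) • q := by rw [two_smul, two_smul]; exact h
    have h2 : (2:ℂ) ≠ 0 := two_ne_zero
    calc p = ((2:ℂ))⁻¹ • ((2:ℂ) • p) := (inv_smul_smul₀ h2 p).symm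
    _ = q := by rw [h']; exact inv_smul_smul₀ h2 q
  -- ## Φ 0 = 0
  have hΦ0 : Φ 0 = 0 := by
    have h := key 0 0
    simpa [starJordan, smul_zero] using h
  -- ## tools
  have toolL4 : ∀ w x₁ x₂ x₃ x₄ : A,
      (2^(n-2) : ℕ) • starJordan w (Φ (x₁+x₂+x₃+x₄) - Φ x₁ - Φ x₂ - Φ x₃ - Φ x₄) =
      Φ ((2^(n-2) : ℕ) • starJordan w (x₁+x₂+x₃+x₄)) - Φ ((2^(n-2) : ℕ) • starJordan w x₁)
        - Φ ((2^(n-2) : ℕ) • starJordan w x₂) - Φ ((2^(n-2) : ℕ) • starJordan w x₃)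
        - Φ ((2^(n-2) : ℕ) • starJordan w x₄) := by
    intro w x₁ x₂ x₃ x₄
    rw [key w (x₁+x₂+x₃+x₄), key w x₁, key w x₂, key w x₃, key w x₄]
    simp only [sj_add_left, sj_add_right, sj_sub_left, sj_sub_right, smul_add, smul_sub,
      Finset.sum_add_distrib]
    abel
  have toolR4 : ∀ x₁ x₂ x₃ x₄ z : A,
      (2^(n-2) : ℕ) • starJordan (Φ (x₁+x₂+x₃+x₄) - Φ x₁ - Φ x₂ - Φ x₃ - Φ x₄) z =
      Φ ((2^(n-2) : ℕ) • starJordan (x₁+x₂+x₃+x₄) z) - Φ ((2^(n-2) : ℕ) • starJordan x₁ z)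
        - Φ ((2^(n-2) : ℕ) • starJordan x₂ z) - Φ ((2^(n-2) : ℕ) • starJordan x₃ z)
        - Φ ((2^(n-2) : ℕ) • starJordan x₄ z) := by
    intro x₁ x₂ x₃ x₄ z
    rw [key (x₁+x₂+x₃+x₄) z, key x₁ z, key x₂ z, key x₃ z, key x₄ z]
    simp only [sj_add_left, sj_add_right, sj_sub_left, sj_sub_right, smul_add, smul_sub,
      Finset.sum_add_distrib]
    abel
  have toolL2 : ∀ w x₁ x₂ : A,
      (2^(n-2) : ℕ) • starJordan w (Φ (x₁+x₂) - Φ x₁ - Φ x₂) =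
      Φ ((2^(n-2) : ℕ) • starJordan w (x₁+x₂)) - Φ ((2^(n-2) : ℕ) • starJordan w x₁)
        - Φ ((2^(n-2) : ℕ) • starJordan w x₂) := by
    intro w x₁ x₂
    have h := toolL4 w x₁ x₂ 0 0
    simpa [hΦ0, sj_zero_right, smul_zero] using h
  -- ## alternative law consequences
  have eer : ∀ r : A, e * (e * r) = e * r := fun r => by rw [← halt₁ e r, heIdem]
  have ree : ∀ r : A, (r * e) * e = r * e := fun r => by rw [halt₂ e r, heIdem]
  have linL : ∀ x y : A, (e*x + x*e)*y = e*(x*y) + x*(e*y) := by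
    intro x y
    have h := halt₁ (e+x) y
    have e1 : (e+x)*(e+x) = e*e + (e*x + x*e) + x*x := by
      simp only [mul_add, add_mul]; abel
    have e2 : (e+x)*((e+x)*y) = e*(e*y) + (e*(x*y) + x*(e*y)) + x*(x*y) := by
      simp only [mul_add, add_mul]; abel
    rw [e1, e2] at h
    rw [add_mul, add_mul] at h
    rw [halt₁ e y, halt₁ x y] at h
    exact add_left_cancel (add_right_cancel h)
  have linR : ∀ x y : A, x*(y*e + e*y) = (x*y)*e + (x*e)*y := by
    intro x y
    have h := halt₂ (y+e) x
    have e1 : x*(y+e)*(y+e) = (x*y)*y + ((x*y)*e + (x*e)*y) + (x*e)*e := by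
      simp only [mul_add, add_mul]; abel
    have e2 : x*((y+e)*(y+e)) = x*(y*y) + (x*(y*e) + x*(e*y)) + x*(e*e) := by
      simp only [mul_add, add_mul]; abel
    rw [e1, e2] at h
    rw [← halt₂ y x, ree x, heIdem] at h
    have h' := add_left_cancel (add_right_cancel h)
    rw [mul_add]
    exact h'.symm
  have flexE : ∀ r : A, (e*r)*e = e*(r*e) := by
    intro r
    have h := linL r e
    rw [add_mul, heIdem, ree r] at h
    exact add_right_cancel h
  have eL : ∀ x y : A, e*(x*y) = (e*x)*y + (x*e)*y - x*(e*y) := by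
    intro x y
    have h := linL x y
    rw [add_mul] at h
    rw [h]; abel
  have eR : ∀ x y : A, (x*y)*e = x*(y*e) + x*(e*y) - (x*e)*y := by
    intro x y
    have h := linR x y
    rw [mul_add] at h
    rw [h]; abel
  -- ## Peirce multiplication rules
  have m11_11a : ∀ x y : A, e*x = x → x*e = x → e*y = y → y*e = y → e*(x*y) = x*y := by
    intro x y hx1 hx2 hy1 _; rw [eL x y, hx1, hx2, hy1]; try simp only [zero_mul, mul_zero]
    abel
  have m11_11b : ∀ x y : A, e*x = x → x*e = x → e*y = y → y*e = y → (x*y)*e = x*y := by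
    intro x y _ hx2 hy1 hy2; rw [eR x y, hx2, hy1, hy2]; try simp only [zero_mul, mul_zero]
    abel
  have m21_11a : ∀ x y : A, e*x = 0 → x*e = x → e*y = y → y*e = y → e*(x*y) = 0 := by
    intro x y hx1 hx2 hy1 _; rw [eL x y, hx1, hx2, hy1]; try simp only [zero_mul, mul_zero]
    abel
  have m21_11b : ∀ x y : A, e*x = 0 → x*e = x → e*y = y → y*e = y → (x*y)*e = x*y := by
    intro x y _ hx2 hy1 hy2; rw [eR x y, hx2, hy1, hy2]; try simp only [zero_mul, mul_zero]
    abel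
  have m11_12a : ∀ x y : A, e*x = x → x*e = x → e*y = y → y*e = 0 → e*(x*y) = x*y := by
    intro x y hx1 hx2 hy1 _; rw [eL x y, hx1, hx2, hy1]; try simp only [zero_mul, mul_zero]
    abel
  have m11_12b : ∀ x y : A, e*x = x → x*e = x → e*y = y → y*e = 0 → (x*y)*e = 0 := by
    intro x y _ hx2 hy1 hy2; rw [eR x y, hx2, hy1, hy2]; try simp only [zero_mul, mul_zero]
    abel
  have m12_22a : ∀ x y : A, e*x = x → x*e = 0 → e*y = 0 → y*e = 0 → e*(x*y) = x*y := by
    intro x y hx1 hx2 hy1 _; rw [eL x y, hx1, hx2, hy1]; try simp only [zero_mul, mul_zero]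
    abel
  have m12_22b : ∀ x y : A, e*x = x → x*e = 0 → e*y = 0 → y*e = 0 → (x*y)*e = 0 := by
    intro x y _ hx2 hy1 hy2; rw [eR x y, hx2, hy1, hy2]; try simp only [zero_mul, mul_zero]
    abel
  have m22_21a : ∀ x y : A, e*x = 0 → x*e = 0 → e*y = 0 → y*e = y → e*(x*y) = 0 := by
    intro x y hx1 hx2 hy1 _; rw [eL x y, hx1, hx2, hy1]; try simp only [zero_mul, mul_zero]
    abel
  have m22_21b : ∀ x y : A, e*x = 0 → x*e = 0 → e*y = 0 → y*e = y → (x*y)*e = x*y := by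
    intro x y _ hx2 hy1 hy2; rw [eR x y, hx2, hy1, hy2]; try simp only [zero_mul, mul_zero]
    abel
  have m22_22a : ∀ x y : A, e*x = 0 → x*e = 0 → e*y = 0 → y*e = 0 → e*(x*y) = 0 := by
    intro x y hx1 hx2 hy1 _; rw [eL x y, hx1, hx2, hy1]; try simp only [zero_mul, mul_zero]
    abel
  have m22_22b : ∀ x y : A, e*x = 0 → x*e = 0 → e*y = 0 → y*e = 0 → (x*y)*e = 0 := by
    intro x y _ hx2 hy1 hy2; rw [eR x y, hx2, hy1, hy2]; try simp only [zero_mul, mul_zero]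
    abel
  have m21_12a : ∀ x y : A, e*x = 0 → x*e = x → e*y = y → y*e = 0 → e*(x*y) = 0 := by
    intro x y hx1 hx2 hy1 _; rw [eL x y, hx1, hx2, hy1]; try simp only [zero_mul, mul_zero]
    abel
  have m21_12b : ∀ x y : A, e*x = 0 → x*e = x → e*y = y → y*e = 0 → (x*y)*e = 0 := by
    intro x y _ hx2 hy1 hy2; rw [eR x y, hx2, hy1, hy2]; try simp only [zero_mul, mul_zero]
    abel
  have m21_21b : ∀ x y : A, e*x = 0 → x*e = x → e*y = 0 → y*e = y → (x*y)*e = 0 := by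
    intro x y _ hx2 hy1 hy2; rw [eR x y, hx2, hy1, hy2]; try simp only [zero_mul, mul_zero]
    abel
  have m12_12b : ∀ x y : A, e*x = x → x*e = 0 → e*y = y → y*e = 0 → (x*y)*e = x*y := by
    intro x y _ hx2 hy1 hy2; rw [eR x y, hx2, hy1, hy2]; try simp only [zero_mul, mul_zero]
    abel
  have m12_21b : ∀ x y : A, e*x = x → x*e = 0 → e*y = 0 → y*e = y → (x*y)*e = x*y := by
    intro x y _ hx2 hy1 hy2; rw [eR x y, hx2, hy1, hy2]; try simp only [zero_mul, mul_zero]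
    abel
  -- zero rules
  have z11_21 : ∀ x y : A, e*x = x → x*e = x → e*y = 0 → y*e = y → x*y = 0 := by
    intro x y hx1 hx2 hy1 _
    have h1 : e*(x*y) = x*y + x*y := by
      rw [eL x y, hx1, hx2, hy1]; try simp only [zero_mul, mul_zero]
      abel
    have h2 := eer (x*y)
    rw [h1, mul_add, h1] at h2
    have h3 : x*y + x*y = 0 := add_eq_left.mp h2
    exact two_cancel (by rw [h3]; abel)
  have z11_22 : ∀ x y : A, e*x = x → x*e = x → e*y = 0 → y*e = 0 → x*y = 0 := by
    intro x y hx1 hx2 hy1 _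
    have h1 : e*(x*y) = x*y + x*y := by
      rw [eL x y, hx1, hx2, hy1]; try simp only [zero_mul, mul_zero]
      abel
    have h2 := eer (x*y)
    rw [h1, mul_add, h1] at h2
    have h3 : x*y + x*y = 0 := add_eq_left.mp h2
    exact two_cancel (by rw [h3]; abel)
  have z12_11 : ∀ x y : A, e*x = x → x*e = 0 → e*y = y → y*e = y → x*y = 0 := by
    intro x y _ hx2 hy1 hy2
    have h1 : (x*y)*e = x*y + x*y := by
      rw [eR x y, hx2, hy1, hy2]; try simp only [zero_mul, mul_zero]
      abel
    have h2 := ree (x*y)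
    rw [h1, add_mul, h1] at h2
    have h3 : x*y + x*y = 0 := add_eq_left.mp h2
    exact two_cancel (by rw [h3]; abel)
  have z22_11 : ∀ x y : A, e*x = 0 → x*e = 0 → e*y = y → y*e = y → x*y = 0 := by
    intro x y hx1 hx2 hy1 _
    have h1 : e*(x*y) = -(x*y) := by
      rw [eL x y, hx1, hx2, hy1]; try simp only [zero_mul, mul_zero]
      abel
    have h2 := eer (x*y)
    have h2 := eer (x*y)
    rw [h1, mul_neg, h1, neg_neg] at h2
    have h3 : x*y + x*y = 0 := eq_neg_iff_add_eq_zero.mp h2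
    exact two_cancel (by rw [h3]; abel)
  have z22_12 : ∀ x y : A, e*x = 0 → x*e = 0 → e*y = y → y*e = 0 → x*y = 0 := by
    intro x y hx1 hx2 hy1 _
    have h1 : e*(x*y) = -(x*y) := by
      rw [eL x y, hx1, hx2, hy1]; try simp only [zero_mul, mul_zero]
      abel
    have h2 := eer (x*y)
    rw [h1, mul_neg, h1, neg_neg] at h2
    have h3 : x*y + x*y = 0 := eq_neg_iff_add_eq_zero.mp h2
    exact two_cancel (by rw [h3]; abel)
  have z21_22 : ∀ x y : A, e*x = 0 → x*e = x → e*y = 0 → y*e = 0 → x*y = 0 := by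
    intro x y _ hx2 hy1 hy2
    have h1 : (x*y)*e = -(x*y) := by
      rw [eR x y, hx2, hy1, hy2]; try simp only [zero_mul, mul_zero]
      abel
    have h2 := ree (x*y)
    rw [h1, neg_mul, h1, neg_neg] at h2
    have h3 : x*y + x*y = 0 := eq_neg_iff_add_eq_zero.mp h2
    exact two_cancel (by rw [h3]; abel)
  -- ## structural lemmas
  have hstarf : star ((1:A) - e) = 1 - e := by rw [star_sub, star_one, heStar]
  have P10 : ∀ m v : A, e*m = m → m*e = m → e*v = 0 → v*e = 0 →
      Φ (m + v) - Φ m - Φ v = 0 := by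
    intro m v hm1 hm2 hv1 hv2
    set U := Φ (m + v) - Φ m - Φ v with hUdef
    have hsjem : starJordan e m = m + m := by rw [starJordan, heStar, hm1, hm2]
    have hsjev : starJordan e v = 0 := by rw [starJordan, heStar, hv1, hv2, add_zero]
    have hsjfm : starJordan (1-e) m = 0 := by
      rw [starJordan, hstarf, sub_mul, mul_sub, one_mul, mul_one, hm1, hm2]; abel
    have hsjfv : starJordan (1-e) v = v + v := by
      rw [starJordan, hstarf, sub_mul, mul_sub, one_mul, mul_one, hv1, hv2]; abel
    have h1 := toolL2 e m v
    rw [sj_add_right, hsjem, hsjev, add_zero, smul_zero, hΦ0, sub_zero, sub_self] at h1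
    have he' := cancel0 h1
    rw [starJordan, heStar] at he'
    have h2 := toolL2 (1-e) m v
    rw [sj_add_right, hsjfm, hsjfv, zero_add, smul_zero, hΦ0] at h2
    have h2' : (2^(n-2) : ℕ) • starJordan (1-e) U = 0 := by
      rw [h2]; abel
    have hf' := cancel0 h2'
    simp only [starJordan, hstarf, sub_mul, mul_sub, one_mul, mul_one] at hf'
    have h3 : U + U - (e*U + U*e) = 0 := by
      rw [← hf']; abel
    rw [he', sub_zero] at h3
    exact two_cancel (by rw [h3]; abel)
  have StrA : ∀ m p q : A, e*m = m → m*e = m → e*p = p → p*e = 0 → e*q = 0 → q*e = q →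
      (e * (Φ (m + (p+q)) - Φ m - Φ (p+q)) = Φ (m + (p+q)) - Φ m - Φ (p+q) ∧
       (Φ (m + (p+q)) - Φ m - Φ (p+q)) * e = Φ (m + (p+q)) - Φ m - Φ (p+q)) := by
    intro m p q hm1 hm2 hp1 hp2 hq1 hq2
    set U := Φ (m + (p+q)) - Φ m - Φ (p+q) with hU
    have hsjfm : starJordan (1-e) m = 0 := by
      rw [starJordan, hstarf, sub_mul, mul_sub, one_mul, mul_one, hm1, hm2]; abel
    have hsjfpq : starJordan (1-e) (p+q) = q + p := by
      rw [starJordan, hstarf, sub_mul, mul_sub, one_mul, mul_one, mul_add, add_mul,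
        hp1, hp2, hq1, hq2]
      abel
    have h1 := toolL2 (1-e) m (p+q)
    rw [sj_add_right, hsjfm, hsjfpq, zero_add, smul_zero, hΦ0] at h1
    have h1' : (2^(n-2) : ℕ) • starJordan (1-e) U = 0 := by
      rw [h1]; abel
    have h2 := cancel0 h1'
    simp only [starJordan, hstarf, sub_mul, mul_sub, one_mul, mul_one] at h2
    have heq : e*U + U*e = U + U := by
      have h3 : (U - e*U) + (U - U*e) = U + U - (e*U + U*e) := by abel
      rw [h3] at h2
      exact (sub_eq_zero.mp h2).symm
    have hl : e*(U*e) = e*U := by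
      have h4 : e*(e*U + U*e) = e*(U+U) := by rw [heq]
      rw [mul_add, mul_add, eer U] at h4
      exact add_left_cancel h4
    have hr : (e*U)*e = U*e := by
      have h4 : (e*U + U*e)*e = (U+U)*e := by rw [heq]
      rw [add_mul, add_mul, ree U] at h4
      exact add_right_cancel h4
    have hEU : e*U = U*e := (hr.symm.trans ((flexE U).trans hl)).symm
    have hEUU : e*U = U := by
      apply two_cancel
      rw [← hEU] at heq
      exact heq
    exact ⟨hEUU, by rw [← hEU]; exact hEUU⟩
  have StrB : ∀ v p q : A, e*v = 0 → v*e = 0 → e*p = p → p*e = 0 → e*q = 0 → q*e = q →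
      (e * (Φ (v + (p+q)) - Φ v - Φ (p+q)) = 0 ∧
       (Φ (v + (p+q)) - Φ v - Φ (p+q)) * e = 0) := by
    intro v p q hv1 hv2 hp1 hp2 hq1 hq2
    set V := Φ (v + (p+q)) - Φ v - Φ (p+q) with hV
    have hsjev : starJordan e v = 0 := by rw [starJordan, heStar, hv1, hv2, add_zero]
    have hsjepq : starJordan e (p+q) = p + q := by
      rw [starJordan, heStar, mul_add, add_mul, hp1, hp2, hq1, hq2]; abel
    have h1 := toolL2 e v (p+q)
    rw [sj_add_right, hsjev, hsjepq, zero_add, smul_zero, hΦ0] at h1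
    have h1' : (2^(n-2) : ℕ) • starJordan e V = 0 := by
      rw [h1]; abel
    have h2 := cancel0 h1'
    rw [starJordan, heStar] at h2
    have h4 : e*(e*V) + e*(V*e) = 0 := by rw [← mul_add, h2, mul_zero]
    rw [eer V] at h4
    have h5 : (e*V)*e + (V*e)*e = 0 := by rw [← add_mul, h2, zero_mul]
    rw [ree V, flexE V] at h5
    have hEV : e*V = V*e := by
      have a1 : e*(V*e) = -(e*V) := by
        have := h4; rw [add_comm] at this; exact eq_neg_of_add_eq_zero_left this
      have a2 : e*(V*e) = -(V*e) := eq_neg_of_add_eq_zero_left h5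
      exact neg_injective (a1.symm.trans a2)
    have hEV0 : e*V = 0 := by
      apply two_cancel
      rw [← hEV] at h2
      rw [h2]; abel
    exact ⟨hEV0, by rw [← hEV]; exact hEV0⟩
  -- ## Step E1 : e*T + T*e = T
  have hu := toolL4 ((2:ℕ)•e - 1) a b c d
  have hsu : star ((2:ℕ)•e - 1) = (2:ℕ)•e - 1 := by
    rw [star_sub, st5_star_nsmul, heStar, star_one]
  have sjut : ∀ p : A, starJordan ((2:ℕ)•e - 1) p
      = (2:ℕ)•(e*p) - p + ((2:ℕ)•(p*e) - p) := by
    intro p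
    rw [starJordan, hsu, sub_mul, st5_nsmul_mul, one_mul, mul_sub, st5_mul_nsmul, mul_one]
  have hsja : starJordan ((2:ℕ)•e - 1) a = a + a := by
    rw [sjut a, ha1, ha2, two_nsmul]
    abel
  have hsjb : starJordan ((2:ℕ)•e - 1) b = 0 := by
    rw [sjut b, hb1, hb2, smul_zero, two_nsmul]
    abel
  have hsjc : starJordan ((2:ℕ)•e - 1) c = 0 := by
    rw [sjut c, hc1, hc2, smul_zero, two_nsmul]
    abel
  have hsjd : starJordan ((2:ℕ)•e - 1) d = -(d + d) := by
    rw [sjut d, hd1, hd2, smul_zero]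
    abel
  have hsjx : starJordan ((2:ℕ)•e - 1) (a+b+c+d) = (a+a) - (d+d) := by
    rw [sj_add_right, sj_add_right, sj_add_right, hsja, hsjb, hsjc, hsjd]
    abel
  rw [hsjx, hsja, hsjb, hsjc, hsjd, smul_zero, hΦ0, sub_zero, sub_zero] at hu
  have hm1' : e * ((2^(n-2) : ℕ) • (a+a)) = (2^(n-2) : ℕ) • (a+a) := by
    rw [st5_mul_nsmul, mul_add, ha1]
  have hm2' : ((2^(n-2) : ℕ) • (a+a)) * e = (2^(n-2) : ℕ) • (a+a) := by
    rw [st5_nsmul_mul, add_mul, ha2]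
  have hv1' : e * ((2^(n-2) : ℕ) • (-(d+d))) = 0 := by
    rw [st5_mul_nsmul, mul_neg, mul_add, hd1, add_zero, neg_zero, smul_zero]
  have hv2' : ((2^(n-2) : ℕ) • (-(d+d))) * e = 0 := by
    rw [st5_nsmul_mul, neg_mul, add_mul, hd2, add_zero, neg_zero, smul_zero]
  have hP10 := P10 _ _ hm1' hm2' hv1' hv2'
  have harg : (2^(n-2) : ℕ) • (a+a) + (2^(n-2) : ℕ) • (-(d+d))
      = (2^(n-2) : ℕ) • ((a+a) - (d+d)) := by
    rw [← smul_add]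
    congr 1
    abel
  rw [harg] at hP10
  rw [hP10] at hu
  have hsjuT := cancel0 hu
  rw [sjut] at hsjuT
  have hE1 : e * (Φ (a+b+c+d) - Φ a - Φ b - Φ c - Φ d)
      + (Φ (a+b+c+d) - Φ a - Φ b - Φ c - Φ d) * e
      = Φ (a+b+c+d) - Φ a - Φ b - Φ c - Φ d := by
    apply two_cancel
    rw [two_nsmul, two_nsmul] at hsjuT
    have h2 : (e * (Φ (a+b+c+d) - Φ a - Φ b - Φ c - Φ d)
        + (Φ (a+b+c+d) - Φ a - Φ b - Φ c - Φ d) * e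
        + (e * (Φ (a+b+c+d) - Φ a - Φ b - Φ c - Φ d)
        + (Φ (a+b+c+d) - Φ a - Φ b - Φ c - Φ d) * e))
        - ((Φ (a+b+c+d) - Φ a - Φ b - Φ c - Φ d) + (Φ (a+b+c+d) - Φ a - Φ b - Φ c - Φ d))
        = (e * (Φ (a+b+c+d) - Φ a - Φ b - Φ c - Φ d)
            + e * (Φ (a+b+c+d) - Φ a - Φ b - Φ c - Φ d)
            - (Φ (a+b+c+d) - Φ a - Φ b - Φ c - Φ d))
          + ((Φ (a+b+c+d) - Φ a - Φ b - Φ c - Φ d) * e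
            + (Φ (a+b+c+d) - Φ a - Φ b - Φ c - Φ d) * e
            - (Φ (a+b+c+d) - Φ a - Φ b - Φ c - Φ d)) := by abel
    have h3 := h2.trans hsjuT
    exact sub_eq_zero.mp h3
  set T := Φ (a+b+c+d) - Φ a - Φ b - Φ c - Φ d with hTdef
  -- ## B and C
  have hBe : (e*T)*e = 0 := by
    have h4 : e*(e*T + T*e) = e*T := by rw [hE1]
    rw [mul_add, eer T] at h4
    have h5 : e*(T*e) = 0 := add_eq_left.mp h4
    rw [flexE T]
    exact h5
  have heB : e*(e*T) = e*T := eer T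
  have hCe : (T*e)*e = T*e := ree T
  have heC : e*(T*e) = 0 := by rw [← flexE T]; exact hBe
  have hsB1 : e * star (e*T) = 0 := by
    have := congrArg star hBe; rwa [star_mul, heStar, star_zero] at this
  have hsB2 : star (e*T) * e = star (e*T) := by
    have := congrArg star heB; rwa [star_mul, heStar] at this
  have hsC1 : e * star (T*e) = star (T*e) := by
    have := congrArg star hCe; rwa [star_mul, heStar] at this
  have hsC2 : star (T*e) * e = 0 := by
    have := congrArg star heC; rwa [star_mul, heStar, star_zero] at this
  -- ## kill C on A11
  have killC : ∀ t : A, e*t = t → t*e = t → (T*e)*t = 0 := by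
    intro t ht1 ht2
    have h := toolR4 a b c d t
    have hsjbt : starJordan b t = 0 := by
      rw [starJordan, z12_11 b t hb1 hb2 ht1 ht2, z11_21 t (star b) ht1 ht2 hsb1 hsb2, add_zero]
    have hsjdt : starJordan d t = 0 := by
      rw [starJordan, z22_11 d t hd1 hd2 ht1 ht2, z11_22 t (star d) ht1 ht2 hsd1 hsd2, add_zero]
    have hsjxt : starJordan (a+b+c+d) t
        = starJordan a t + starJordan c t := by
      rw [sj_add_left, sj_add_left, sj_add_left, hsjbt, hsjdt, add_zero, add_zero]
    rw [hsjxt, hsjbt, hsjdt, smul_zero, hΦ0, sub_zero, sub_zero] at h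
    -- memberships for StrA
    have hm1' : e * ((2^(n-2) : ℕ) • starJordan a t) = (2^(n-2) : ℕ) • starJordan a t := by
      rw [st5_mul_nsmul]
      congr 1
      rw [starJordan, mul_add, m11_11a a t ha1 ha2 ht1 ht2,
        m11_11a t (star a) ht1 ht2 hsa1 hsa2]
    have hm2' : ((2^(n-2) : ℕ) • starJordan a t) * e = (2^(n-2) : ℕ) • starJordan a t := by
      rw [st5_nsmul_mul]
      congr 1
      rw [starJordan, add_mul, m11_11b a t ha1 ha2 ht1 ht2,
        m11_11b t (star a) ht1 ht2 hsa1 hsa2]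
    have hp1' : e * ((2^(n-2) : ℕ) • (t * star c)) = (2^(n-2) : ℕ) • (t * star c) := by
      rw [st5_mul_nsmul, m11_12a t (star c) ht1 ht2 hsc1 hsc2]
    have hp2' : ((2^(n-2) : ℕ) • (t * star c)) * e = 0 := by
      rw [st5_nsmul_mul, m11_12b t (star c) ht1 ht2 hsc1 hsc2, smul_zero]
    have hq1' : e * ((2^(n-2) : ℕ) • (c * t)) = 0 := by
      rw [st5_mul_nsmul, m21_11a c t hc1 hc2 ht1 ht2, smul_zero]
    have hq2' : ((2^(n-2) : ℕ) • (c * t)) * e = (2^(n-2) : ℕ) • (c * t) := by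
      rw [st5_nsmul_mul, m21_11b c t hc1 hc2 ht1 ht2]
    have hstr := StrA ((2^(n-2) : ℕ) • starJordan a t) ((2^(n-2) : ℕ) • (t * star c))
      ((2^(n-2) : ℕ) • (c * t)) hm1' hm2' hp1' hp2' hq1' hq2'
    have harg1 : (2^(n-2) : ℕ) • (starJordan a t + starJordan c t)
        = (2^(n-2) : ℕ) • starJordan a t
          + ((2^(n-2) : ℕ) • (t * star c) + (2^(n-2) : ℕ) • (c * t)) := by
      rw [smul_add]
      congr 1
      rw [starJordan, smul_add]
      abel
    have harg2 : (2^(n-2) : ℕ) • starJordan c t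
        = (2^(n-2) : ℕ) • (t * star c) + (2^(n-2) : ℕ) • (c * t) := by
      rw [starJordan, smul_add]
      abel
    rw [harg1, harg2] at h
    have heX : e * ((2^(n-2) : ℕ) • starJordan T t) = (2^(n-2) : ℕ) • starJordan T t := by
      rw [h]; exact hstr.1
    have hsjTt : starJordan T t = (T*e)*t + t * star (T*e) := by
      have hTBC : T = e*T + T*e := hE1.symm
      have h0 : starJordan (e*T + T*e) t = (T*e)*t + t * star (T*e) := by
        rw [sj_add_left, starJordan, starJordan,
          z12_11 (e*T) t heB hBe ht1 ht2, z11_21 t (star (e*T)) ht1 ht2 hsB1 hsB2]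
        abel
      rw [← hTBC] at h0
      exact h0
    rw [hsjTt, st5_mul_nsmul] at heX
    have heX2 := cancel heX
    rw [mul_add, m21_11a (T*e) t heC hCe ht1 ht2,
      m11_12a t (star (T*e)) ht1 ht2 hsC1 hsC2, zero_add] at heX2
    have : (T*e)*t + t * star (T*e) = 0 + t * star (T*e) := by
      rw [zero_add]; exact heX2.symm
    exact add_right_cancel this
  -- ## kill B on A22
  have killB : ∀ t : A, e*t = 0 → t*e = 0 → (e*T)*t = 0 := by
    intro t ht1 ht2
    have h := toolR4 a b c d t
    have hsjat : starJordan a t = 0 := by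
      rw [starJordan, z11_22 a t ha1 ha2 ht1 ht2, z22_11 t (star a) ht1 ht2 hsa1 hsa2, add_zero]
    have hsjct : starJordan c t = 0 := by
      rw [starJordan, z21_22 c t hc1 hc2 ht1 ht2, z22_12 t (star c) ht1 ht2 hsc1 hsc2, add_zero]
    have hsjxt : starJordan (a+b+c+d) t
        = starJordan b t + starJordan d t := by
      rw [sj_add_left, sj_add_left, sj_add_left, hsjat, hsjct, zero_add, add_zero]
    rw [hsjxt, hsjat, hsjct, smul_zero, hΦ0, sub_zero, sub_zero] at h
    -- memberships for StrB
    have hv1' : e * ((2^(n-2) : ℕ) • starJordan d t) = 0 := by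
      rw [st5_mul_nsmul, starJordan, mul_add, m22_22a d t hd1 hd2 ht1 ht2,
        m22_22a t (star d) ht1 ht2 hsd1 hsd2, add_zero, smul_zero]
    have hv2' : ((2^(n-2) : ℕ) • starJordan d t) * e = 0 := by
      rw [st5_nsmul_mul, starJordan, add_mul, m22_22b d t hd1 hd2 ht1 ht2,
        m22_22b t (star d) ht1 ht2 hsd1 hsd2, add_zero, smul_zero]
    have hp1' : e * ((2^(n-2) : ℕ) • (b * t)) = (2^(n-2) : ℕ) • (b * t) := by
      rw [st5_mul_nsmul, m12_22a b t hb1 hb2 ht1 ht2]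
    have hp2' : ((2^(n-2) : ℕ) • (b * t)) * e = 0 := by
      rw [st5_nsmul_mul, m12_22b b t hb1 hb2 ht1 ht2, smul_zero]
    have hq1' : e * ((2^(n-2) : ℕ) • (t * star b)) = 0 := by
      rw [st5_mul_nsmul, m22_21a t (star b) ht1 ht2 hsb1 hsb2, smul_zero]
    have hq2' : ((2^(n-2) : ℕ) • (t * star b)) * e = (2^(n-2) : ℕ) • (t * star b) := by
      rw [st5_nsmul_mul, m22_21b t (star b) ht1 ht2 hsb1 hsb2]
    have hstr := StrB ((2^(n-2) : ℕ) • starJordan d t) ((2^(n-2) : ℕ) • (b * t))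
      ((2^(n-2) : ℕ) • (t * star b)) hv1' hv2' hp1' hp2' hq1' hq2'
    have harg1 : (2^(n-2) : ℕ) • (starJordan b t + starJordan d t)
        = (2^(n-2) : ℕ) • starJordan d t
          + ((2^(n-2) : ℕ) • (b * t) + (2^(n-2) : ℕ) • (t * star b)) := by
      rw [smul_add]
      have : (2^(n-2) : ℕ) • starJordan b t
          = (2^(n-2) : ℕ) • (b * t) + (2^(n-2) : ℕ) • (t * star b) := by
        rw [starJordan, smul_add]
      rw [this]
      abel
    have harg2 : (2^(n-2) : ℕ) • starJordan b t
        = (2^(n-2) : ℕ) • (b * t) + (2^(n-2) : ℕ) • (t * star b) := by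
      rw [starJordan, smul_add]
    rw [harg1, harg2] at h
    have h' : (2^(n-2) : ℕ) • starJordan T t
        = Φ ((2^(n-2) : ℕ) • starJordan d t
            + ((2^(n-2) : ℕ) • (b * t) + (2^(n-2) : ℕ) • (t * star b)))
          - Φ ((2^(n-2) : ℕ) • starJordan d t)
          - Φ ((2^(n-2) : ℕ) • (b * t) + (2^(n-2) : ℕ) • (t * star b)) := by
      rw [h]; abel
    have heX : e * ((2^(n-2) : ℕ) • starJordan T t) = 0 := by
      rw [h']; exact hstr.1
    have hsjTt : starJordan T t = (e*T)*t + t * star (e*T) := by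
      have hTBC : T = e*T + T*e := hE1.symm
      have h0 : starJordan (e*T + T*e) t = (e*T)*t + t * star (e*T) := by
        rw [sj_add_left, starJordan, starJordan,
          z21_22 (T*e) t heC hCe ht1 ht2, z22_12 t (star (T*e)) ht1 ht2 hsC1 hsC2]
        abel
      rw [← hTBC] at h0
      exact h0
    rw [hsjTt, st5_mul_nsmul] at heX
    have heX2 := cancel0 heX
    rw [mul_add, m12_22a (e*T) t heB hBe ht1 ht2,
      m22_21a t (star (e*T)) ht1 ht2 hsB1 hsB2, add_zero] at heX2
    exact heX2
  -- ## final nondegeneracy arguments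
  have haux : ∀ r : A, e*((e*r)*e) = (e*r)*e := by
    intro r
    rw [flexE r]
    exact eer (r*e)
  have hC0 : T*e = 0 := by
    apply hsp
    intro r
    have hr11a : e * ((e*r)*e) = (e*r)*e := haux r
    have hr11b : ((e*r)*e) * e = (e*r)*e := ree (e*r)
    have hr12a : e * (e*r - (e*r)*e) = e*r - (e*r)*e := by
      rw [mul_sub, eer r, haux r]
    have hr12b : (e*r - (e*r)*e) * e = 0 := by
      rw [sub_mul, ree (e*r), sub_self]
    have hr21a : e * (r*e - (e*r)*e) = 0 := by
      rw [mul_sub, ← flexE r, haux r, sub_self]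
    have hr21b : (r*e - (e*r)*e) * e = r*e - (e*r)*e := by
      rw [sub_mul, ree r, ree (e*r)]
    have hr22a : e * (r - e*r - r*e + (e*r)*e) = 0 := by
      rw [mul_add, mul_sub, mul_sub, eer r, ← flexE r, haux r]
      abel
    have hr22b : (r - e*r - r*e + (e*r)*e) * e = 0 := by
      rw [add_mul, sub_mul, sub_mul, ree r, ree (e*r)]
      abel
    have hrdec : r = (e*r)*e + (e*r - (e*r)*e) + (r*e - (e*r)*e) + (r - e*r - r*e + (e*r)*e) := by
      abel
    calc (T*e) * r * e
        = (T*e) * ((e*r)*e + (e*r - (e*r)*e) + (r*e - (e*r)*e) + (r - e*r - r*e + (e*r)*e)) * e := by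
          rw [← hrdec]
      _ = 0 := by
          rw [mul_add, mul_add, mul_add]
          rw [killC ((e*r)*e) hr11a hr11b]
          rw [z21_22 (T*e) (r - e*r - r*e + (e*r)*e) heC hCe hr22a hr22b]
          rw [add_mul, add_mul, add_mul, zero_mul]
          rw [m21_12b (T*e) (e*r - (e*r)*e) heC hCe hr12a hr12b]
          rw [m21_21b (T*e) (r*e - (e*r)*e) heC hCe hr21a hr21b]
          abel
  have hB0 : e*T = 0 := by
    apply hcl
    intro r
    have hr11a : e * ((e*r)*e) = (e*r)*e := haux r
    have hr11b : ((e*r)*e) * e = (e*r)*e := ree (e*r)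
    have hr12a : e * (e*r - (e*r)*e) = e*r - (e*r)*e := by
      rw [mul_sub, eer r, haux r]
    have hr12b : (e*r - (e*r)*e) * e = 0 := by
      rw [sub_mul, ree (e*r), sub_self]
    have hr21a : e * (r*e - (e*r)*e) = 0 := by
      rw [mul_sub, ← flexE r, haux r, sub_self]
    have hr21b : (r*e - (e*r)*e) * e = r*e - (e*r)*e := by
      rw [sub_mul, ree r, ree (e*r)]
    have hr22a : e * (r - e*r - r*e + (e*r)*e) = 0 := by
      rw [mul_add, mul_sub, mul_sub, eer r, ← flexE r, haux r]
      abel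
    have hr22b : (r - e*r - r*e + (e*r)*e) * e = 0 := by
      rw [add_mul, sub_mul, sub_mul, ree r, ree (e*r)]
      abel
    have hrdec : r = (e*r)*e + (e*r - (e*r)*e) + (r*e - (e*r)*e) + (r - e*r - r*e + (e*r)*e) := by
      abel
    calc (e*T) * r * (1-e)
        = (e*T) * ((e*r)*e + (e*r - (e*r)*e) + (r*e - (e*r)*e) + (r - e*r - r*e + (e*r)*e)) * (1-e) := by
          rw [← hrdec]
      _ = 0 := by
          rw [mul_add, mul_add, mul_add]
          rw [z12_11 (e*T) ((e*r)*e) heB hBe hr11a hr11b]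
          rw [killB (r - e*r - r*e + (e*r)*e) hr22a hr22b]
          rw [mul_sub, mul_one]
          rw [add_mul, add_mul, add_mul, zero_mul]
          rw [m12_12b (e*T) (e*r - (e*r)*e) heB hBe hr12a hr12b]
          rw [m12_21b (e*T) (r*e - (e*r)*e) heB hBe hr21a hr21b]
          abel
  -- ## conclusion
  have hT0 : T = 0 := by
    rw [← hE1, hB0, hC0, add_zero]
  rw [hTdef] at hT0
  rw [sub_sub, sub_sub, sub_sub, sub_eq_zero] at hT0
  rw [hT0]
  abel
end
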